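/- Let Λ, Λ̃ ⊆ ℝⁿ be full-rank lattices and let A ∈ O(n,ℝ) be an orthogonal linear map such that A maps the union of the Brillouin hyperplanes of Λ onto the union of the Brillouin hyperplanes of Λ̃, i.e. A(⋃_{λ ∈ Λ \ {0}} V_λ) = ⋃_{λ̃ ∈ Λ̃ \ {0}} V_{λ̃}. Then Λ̃ = A(Λ). -/

import Mathlib

open Set

noncomputable section

/-- Euclidean `n`-space, identified with the tangent plane at the basepoint of a flat torus. -/
abbrev Euc (n : ℕ) := EuclideanSpace ℝ (Fin n)

/-- `Λ ⊆ ℝⁿ` is a full-rank lattice: the image of `ℤⁿ` under some `L ∈ GL(n,ℝ)`,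
equivalently the set of integer combinations of a basis of `ℝⁿ`. -/
def IsFullLattice {n : ℕ} (Λ : Set (Euc n)) : Prop :=
  ∃ b : Module.Basis (Fin n) ℝ (Euc n),
    Λ = {v : Euc n | ∃ m : Fin n → ℤ, v = ∑ i, (m i : ℝ) • b i}

/-- The Brillouin hyperplane `V_λ = {v : ‖v‖ = ‖v - λ‖}` (perpendicular bisector of `0` and `λ`). -/
def Bplane {n : ℕ} (lam : Euc n) : Set (Euc n) :=
  {v : Euc n | ‖v‖ = ‖v - lam‖}

/-- `μ(v) = #{λ ∈ Λ \ {0} : ‖v − λ‖ = ‖v‖}`. -/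
def mu {n : ℕ} (Λ : Set (Euc n)) (v : Euc n) : ℕ :=
  Set.ncard {lam : Euc n | lam ∈ Λ ∧ lam ≠ 0 ∧ ‖v - lam‖ = ‖v‖}

/-- The focal component `σ_i(Λ) = {v : μ(v) = i − 1}`. -/
def focalComp {n : ℕ} (Λ : Set (Euc n)) (i : ℕ) : Set (Euc n) :=
  {v : Euc n | mu Λ v = i - 1}

/-- The Brillouin set `B_k(Λ) = {v : #{λ ∈ Λ : ‖v − λ‖ ≤ ‖v‖} = k}` (here `λ = 0` is counted). -/
def brillouin {n : ℕ} (Λ : Set (Euc n)) (k : ℕ) : Set (Euc n) :=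
  {v : Euc n | Set.ncard {lam : Euc n | lam ∈ Λ ∧ ‖v - lam‖ ≤ ‖v‖} = k}

/-- `ι(v) = #{λ ∈ Λ \ {0} : V_λ meets the open segment from 0 to v}`. -/
def iota {n : ℕ} (Λ : Set (Euc n)) (v : Euc n) : ℕ :=
  Set.ncard {lam : Euc n | lam ∈ Λ ∧ lam ≠ 0 ∧
    ∃ t : ℝ, 0 < t ∧ t < 1 ∧ t • v ∈ Bplane lam}

/-!
If `V_λ` is covered by the countably many hyperplanes `V_μ`, `μ ∈ Λ \ {0}`, then by Baire's
theorem one `V_μ` contains an open piece of `V_λ`, hence all of it, and then `μ = λ`. So a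
countable set containing `0` is determined by the union of its Brillouin hyperplanes, while an
isometry maps the union of those of `Λ` to the union of those of `A(Λ)`.
-/

theorem exists_forall_apply_eq_of_forall_exists_apply_eq {𝕜 E ι : Type*}
    [NontriviallyNormedField 𝕜] [AddCommGroup E] [Module 𝕜 E] [TopologicalSpace E]
    [IsTopologicalAddGroup E] [ContinuousSMul 𝕜 E] [BaireSpace E] [Countable ι]
    (f : ι → E →L[𝕜] 𝕜) (c : ι → 𝕜)
    (h : ∀ x, ∃ i, f i x = c i) : ∃ i, ∀ x, f i x = c i := by
  obtain ⟨i, x₀, hx₀⟩ := nonempty_interior_of_iUnion_of_closed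
    (f := fun i ↦ f i ⁻¹' {c i}) (fun i ↦ isClosed_singleton.preimage (f i).continuous)
    (eq_univ_of_forall fun x ↦ mem_iUnion.2 (h x))
  have hfx₀ : f i x₀ = c i := interior_subset (s := f i ⁻¹' {c i}) hx₀
  have hker : LinearMap.ker (f i : E →ₗ[𝕜] 𝕜) = ⊤ := by
    refine Submodule.eq_top_of_nonempty_interior' _ ⟨0, mem_interior_iff_mem_nhds.2 ?_⟩
    have hnhds : (· + x₀) ⁻¹' (f i ⁻¹' {c i}) ∈ nhds (0 : E) :=
      (continuous_add_const x₀).continuousAt.preimage_mem_nhds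
        (by simpa using mem_interior_iff_mem_nhds.1 hx₀)
    refine Filter.mem_of_superset hnhds fun y hy ↦ ?_
    simp_all
  refine ⟨i, fun x ↦ ?_⟩
  have : x - x₀ ∈ LinearMap.ker (f i : E →ₗ[𝕜] 𝕜) := hker ▸ Submodule.mem_top
  rw [LinearMap.mem_ker, map_sub, sub_eq_zero] at this
  exact this.trans hfx₀

section

variable {n : ℕ}

theorem mem_bplane_iff {lam v : Euc n} : v ∈ Bplane lam ↔ inner ℝ lam v = ‖lam‖ ^ 2 / 2 := by
  rw [show v ∈ Bplane lam ↔ ‖v‖ = ‖v - lam‖ from Iff.rfl,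
    ← sq_eq_sq₀ (norm_nonneg _) (norm_nonneg _), norm_sub_sq_real, real_inner_comm]
  constructor <;> intro h <;> linarith

theorem add_half_mem_bplane {lam w : Euc n} (hw : w ∈ (ℝ ∙ lam)ᗮ) :
    w + (2⁻¹ : ℝ) • lam ∈ Bplane lam := by
  rw [mem_bplane_iff, inner_add_right, Submodule.mem_orthogonal_singleton_iff_inner_right.1 hw,
    real_inner_smul_right, real_inner_self_eq_norm_sq]
  ring

theorem eq_of_forall_add_half_mem_bplane {lam mu : Euc n} (hlam : lam ≠ 0) (hmu : mu ≠ 0)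
    (h : ∀ w ∈ (ℝ ∙ lam)ᗮ, w + (2⁻¹ : ℝ) • lam ∈ Bplane mu) : mu = lam := by
  have hhalf := mem_bplane_iff.1 (by simpa using h 0 (Submodule.zero_mem _))
  have horth : mu ∈ (ℝ ∙ lam)ᗮᗮ := (Submodule.mem_orthogonal' _ _).2 fun w hw ↦ by
    have := mem_bplane_iff.1 (h w hw)
    rw [inner_add_right, hhalf] at this
    linarith
  rw [Submodule.orthogonal_orthogonal] at horth
  obtain ⟨t, rfl⟩ := Submodule.mem_span_singleton.1 horth
  have ht : t ≠ 0 := by rintro rfl; simp at hmu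
  have hlam2 : ‖lam‖ ^ 2 ≠ 0 := by positivity
  rw [real_inner_smul_left, real_inner_smul_right, real_inner_self_eq_norm_sq, norm_smul,
    mul_pow, Real.norm_eq_abs, sq_abs] at hhalf
  have : t = 1 := by
    apply mul_left_cancel₀ ht
    apply mul_left_cancel₀ hlam2
    linear_combination (-2) * hhalf
  rw [this, one_smul]

theorem LinearIsometryEquiv.image_bplane (A : Euc n ≃ₗᵢ[ℝ] Euc n) (lam : Euc n) :
    A '' Bplane lam = Bplane (A lam) := by
  ext v
  rw [A.image_eq_preimage_symm, mem_preimage]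
  change ‖A.symm v‖ = ‖A.symm v - lam‖ ↔ ‖v‖ = ‖v - A lam‖
  rw [← A.symm_apply_apply lam, ← map_sub, A.symm.norm_map, A.symm.norm_map,
    A.symm_apply_apply]

def bplaneUnion (Λ : Set (Euc n)) : Set (Euc n) :=
  ⋃ lam ∈ {l : Euc n | l ∈ Λ ∧ l ≠ 0}, Bplane lam

theorem LinearIsometryEquiv.image_bplaneUnion (A : Euc n ≃ₗᵢ[ℝ] Euc n) (Λ : Set (Euc n)) :
    A '' bplaneUnion Λ = bplaneUnion (A '' Λ) := by
  simp only [bplaneUnion, image_iUnion₂, A.image_bplane]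
  ext v
  simp only [mem_iUnion]
  constructor
  · rintro ⟨l, ⟨hl, hl0⟩, hv⟩
    exact ⟨A l, ⟨mem_image_of_mem A hl, by simpa using hl0⟩, hv⟩
  · rintro ⟨_, ⟨⟨l, hl, rfl⟩, hl0⟩, hv⟩
    exact ⟨l, ⟨hl, by simpa using hl0⟩, hv⟩

theorem mem_of_bplane_subset_bplaneUnion {Λ : Set (Euc n)} (hΛ : Λ.Countable) {lam : Euc n}
    (hlam : lam ≠ 0) (h : Bplane lam ⊆ bplaneUnion Λ) : lam ∈ Λ := by
  -- `w ↦ w + lam / 2` parametrizes `Bplane lam` by `W`, in which the traces of the `Bplane mu`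
  -- are level sets of continuous linear functionals.
  let W := (ℝ ∙ lam)ᗮ
  let S := {l : Euc n | l ∈ Λ ∧ l ≠ 0}
  have : Countable S := (hΛ.mono fun _ hl ↦ hl.1).to_subtype
  have hcover : ∀ w : W, ∃ mu : S, (innerSL ℝ (mu : Euc n) ∘L W.subtypeL) w =
      ‖(mu : Euc n)‖ ^ 2 / 2 - inner ℝ (mu : Euc n) ((2⁻¹ : ℝ) • lam) := fun w ↦ by
    obtain ⟨mu, hmu, hw⟩ := mem_iUnion₂.1 (h (add_half_mem_bplane w.2))
    refine ⟨⟨mu, hmu⟩, ?_⟩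
    rw [mem_bplane_iff, inner_add_right] at hw
    simp only [ContinuousLinearMap.comp_apply, Submodule.subtypeL_apply, innerSL_apply_apply]
    linarith
  obtain ⟨⟨mu, hmuΛ, hmu0⟩, hmu⟩ := exists_forall_apply_eq_of_forall_exists_apply_eq _ _ hcover
  have : mu = lam := eq_of_forall_add_half_mem_bplane hlam hmu0 fun w hw ↦ by
    have := hmu ⟨w, hw⟩
    simp only [ContinuousLinearMap.comp_apply, Submodule.subtypeL_apply,
      innerSL_apply_apply] at this
    rw [mem_bplane_iff, inner_add_right]
    linarith
  exact this ▸ hmuΛ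

theorem subset_of_bplaneUnion_subset {Λ₁ Λ₂ : Set (Euc n)} (h₂ : Λ₂.Countable)
    (h0₂ : (0 : Euc n) ∈ Λ₂) (h : bplaneUnion Λ₁ ⊆ bplaneUnion Λ₂) : Λ₁ ⊆ Λ₂ := by
  intro lam hlam
  obtain rfl | hlam0 := eq_or_ne lam 0
  · exact h0₂
  · exact mem_of_bplane_subset_bplaneUnion h₂ hlam0 <| (subset_biUnion_of_mem (u := Bplane)
      (show lam ∈ {l | l ∈ Λ₁ ∧ l ≠ 0} from ⟨hlam, hlam0⟩)).trans h

theorem eq_of_bplaneUnion_eq {Λ₁ Λ₂ : Set (Euc n)} (h₁ : Λ₁.Countable) (h₂ : Λ₂.Countable)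
    (h0₁ : (0 : Euc n) ∈ Λ₁) (h0₂ : (0 : Euc n) ∈ Λ₂) (h : bplaneUnion Λ₁ = bplaneUnion Λ₂) :
    Λ₁ = Λ₂ :=
  (subset_of_bplaneUnion_subset h₂ h0₂ h.le).antisymm (subset_of_bplaneUnion_subset h₁ h0₁ h.ge)

theorem IsFullLattice.countable {Λ : Set (Euc n)} (h : IsFullLattice Λ) : Λ.Countable := by
  obtain ⟨b, rfl⟩ := h
  refine Countable.mono ?_ (countable_range fun m : Fin n → ℤ ↦ ∑ i, (m i : ℝ) • b i)
  rintro _ ⟨m, rfl⟩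
  exact ⟨m, rfl⟩

theorem IsFullLattice.zero_mem {Λ : Set (Euc n)} (h : IsFullLattice Λ) : (0 : Euc n) ∈ Λ := by
  obtain ⟨b, rfl⟩ := h
  exact ⟨0, by simp⟩

end

/-- If an orthogonal linear map `A ∈ O(n,ℝ)` maps the union of the Brillouin hyperplanes
of a full-rank lattice `Λ` onto the union of the Brillouin hyperplanes of a full-rank
lattice `Λ'`, then `Λ' = A(Λ)`. -/
theorem orthogonal_maps_bplanes_maps_lattice {n : ℕ}
    (Λ Λ' : Set (Euc n)) (hΛ : IsFullLattice Λ) (hΛ' : IsFullLattice Λ')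
    (A : Euc n ≃ₗᵢ[ℝ] Euc n)
    (hA : A '' (⋃ lam ∈ {l : Euc n | l ∈ Λ ∧ l ≠ 0}, Bplane lam)
        = ⋃ lam ∈ {l : Euc n | l ∈ Λ' ∧ l ≠ 0}, Bplane lam) :
    Λ' = A '' Λ := by
  have hA' : bplaneUnion Λ' = bplaneUnion (A '' Λ) := hA.symm.trans (A.image_bplaneUnion Λ)
  exact eq_of_bplaneUnion_eq hΛ'.countable (hΛ.countable.image A) hΛ'.zero_mem
    ⟨0, hΛ.zero_mem, map_zero A⟩ hA'
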